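/- arXiv:math-ph/0609032 — 4 statements merged into one kernel-verified Lean document; each statement's English description precedes it below -/
import Mathlib

section
/- Let H and H' be complex Hilbert spaces, U : H → H' a linear isometry (so that U*U = I on H and U U* is an orthogonal projection on H'), α ∈ (0,1), and G a bounded self-adjoint nonnegative operator on H' satisfying G² ≤ α·I in the Loewner order. Then the operator I − G U U* G on H' is invertible, and in the Loewner order on bounded self-adjoint operators on H one has U* G² U ≤ U* G (I − G U U* G)^{−1} G U ≤ (1−α)^{−1} U* G² U. -/
/-!
`P = U U*` is an orthogonal projection, so `T = G P G` satisfies `0 ≤ T ≤ G² ≤ α`. Hence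
`1 - α ≤ 1 - T ≤ 1`, so `1 - T` is strictly positive, and since inversion is operator-antitone on
strictly positive elements of a C⋆-algebra, `1 ≤ (1 - T)⁻¹ ≤ (1 - α)⁻¹`. Conjugating by `G` and
then by `U` preserves these inequalities.
-/

open ContinuousLinearMap

lemma Ring.inverse_algebraMap {𝕜 A : Type*} [Field 𝕜] [Ring A] [Algebra 𝕜 A] {r : 𝕜}
    (hr : r ≠ 0) : Ring.inverse (algebraMap 𝕜 A r) = algebraMap 𝕜 A r⁻¹ := by
  simpa using Ring.inverse_unit ((Units.mk0 r hr).map (algebraMap 𝕜 A).toMonoidHom)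

namespace CStarAlgebra

variable {A : Type*} [CStarAlgebra A] [PartialOrder A] [StarOrderedRing A]
  {t : A} {α : ℝ}

lemma algebraMap_one_sub_le_one_sub (ht : t ≤ algebraMap ℝ A α) :
    algebraMap ℝ A (1 - α) ≤ 1 - t := by
  rw [map_sub, map_one]
  exact sub_le_sub_left ht 1

lemma isStrictlyPositive_one_sub (hα : α < 1) (ht : t ≤ algebraMap ℝ A α) :
    IsStrictlyPositive (1 - t) :=
  (isStrictlyPositive_algebraMap (sub_pos.mpr hα)).of_le (algebraMap_one_sub_le_one_sub ht)

lemma one_le_ringInverse_one_sub (ht₀ : 0 ≤ t) (ht : IsStrictlyPositive (1 - t)) :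
    1 ≤ Ring.inverse (1 - t) := by
  simpa using ringInverse_le_ringInverse (sub_le_self 1 ht₀) ht

lemma ringInverse_one_sub_le (hα : α < 1) (ht : t ≤ algebraMap ℝ A α) :
    Ring.inverse (1 - t) ≤ algebraMap ℝ A (1 - α)⁻¹ := by
  rw [← Ring.inverse_algebraMap (sub_pos.mpr hα).ne']
  exact ringInverse_le_ringInverse (algebraMap_one_sub_le_one_sub ht)
    (isStrictlyPositive_algebraMap (sub_pos.mpr hα))

end CStarAlgebra

lemma LinearIsometry.isStarProjection_comp_adjoint {𝕜 E F : Type*} [RCLike 𝕜]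
    [NormedAddCommGroup E] [InnerProductSpace 𝕜 E] [CompleteSpace E]
    [NormedAddCommGroup F] [InnerProductSpace 𝕜 F] [CompleteSpace F] (U : E →ₗᵢ[𝕜] F) :
    IsStarProjection (U.toContinuousLinearMap ∘L adjoint U.toContinuousLinearMap) where
  isIdempotentElem := by
    change (_ ∘L _) ∘L (_ ∘L _) = _
    rw [ContinuousLinearMap.comp_assoc, ← ContinuousLinearMap.comp_assoc _ U.toContinuousLinearMap,
      U.adjoint_comp_self]
    rfl
  isSelfAdjoint := by
    rw [IsSelfAdjoint, star_eq_adjoint, adjoint_comp, adjoint_adjoint]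

lemma ContinuousLinearMap.adjoint_conj_mono {𝕜 E F : Type*} [RCLike 𝕜]
    [NormedAddCommGroup E] [InnerProductSpace 𝕜 E] [CompleteSpace E]
    [NormedAddCommGroup F] [InnerProductSpace 𝕜 F] [CompleteSpace F] (S : F →L[𝕜] E) :
    Monotone fun T : E →L[𝕜] E ↦ adjoint S ∘L T ∘L S := by
  intro T₁ T₂ h
  rw [le_def] at h ⊢
  simpa only [sub_comp, comp_sub] using h.adjoint_conj S

theorem stmt4 {H H' : Type*}
    [NormedAddCommGroup H] [InnerProductSpace ℂ H] [CompleteSpace H]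
    [NormedAddCommGroup H'] [InnerProductSpace ℂ H'] [CompleteSpace H']
    (U : H →ₗᵢ[ℂ] H') (α : ℝ) (hα : α ∈ Set.Ioo (0 : ℝ) 1)
    (G : H' →L[ℂ] H') (hGpos : G.IsPositive)
    -- `G² ≤ α·I` in the Loewner order:
    (hG2 : G * G ≤ (α : ℂ) • (1 : H' →L[ℂ] H')) :
    IsUnit ((1 : H' →L[ℂ] H') -
        G * (U.toContinuousLinearMap ∘L adjoint U.toContinuousLinearMap) * G) ∧
    ((adjoint U.toContinuousLinearMap) ∘L (G * G) ∘L U.toContinuousLinearMap ≤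
      (adjoint U.toContinuousLinearMap) ∘L
        (G * Ring.inverse ((1 : H' →L[ℂ] H') -
            G * (U.toContinuousLinearMap ∘L adjoint U.toContinuousLinearMap) * G) * G) ∘L
        U.toContinuousLinearMap) ∧
    ((adjoint U.toContinuousLinearMap) ∘L
        (G * Ring.inverse ((1 : H' →L[ℂ] H') -
            G * (U.toContinuousLinearMap ∘L adjoint U.toContinuousLinearMap) * G) * G) ∘L
        U.toContinuousLinearMap ≤
      (((1 - α)⁻¹ : ℝ) : ℂ) •
        ((adjoint U.toContinuousLinearMap) ∘L (G * G) ∘L U.toContinuousLinearMap)) := by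
  set V := U.toContinuousLinearMap
  set T := G * (V ∘L adjoint V) * G
  have hG : IsSelfAdjoint G := hGpos.isSelfAdjoint
  have hP : IsStarProjection (V ∘L adjoint V) := U.isStarProjection_comp_adjoint
  have hT₀ : 0 ≤ T := hG.conjugate_nonneg hP.nonneg
  have hTα : T ≤ algebraMap ℝ _ α := by
    calc T ≤ G * 1 * G := hG.conjugate_le_conjugate hP.le_one
      _ = G * G := by rw [mul_one]
      _ ≤ algebraMap ℝ _ α := by rwa [Algebra.algebraMap_eq_smul_one, ← Complex.coe_smul]
  have hT₁ : IsStrictlyPositive (1 - T) := CStarAlgebra.isStrictlyPositive_one_sub hα.2 hTα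
  refine ⟨hT₁.isUnit, adjoint_conj_mono V ?_, ?_⟩
  · simpa using hG.conjugate_le_conjugate (CStarAlgebra.one_le_ringInverse_one_sub hT₀ hT₁)
  · convert adjoint_conj_mono V
      (hG.conjugate_le_conjugate (CStarAlgebra.ringInverse_one_sub_le hα.2 hTα)) using 1
    rw [Complex.coe_smul]
    simp [Algebra.algebraMap_eq_smul_one]
end

section
/- Assume ∫₀¹ f(ar) r dr > 0 and let p > 0. Then there exist t₀ ≥ 3 and τ₀ > 0 such that w is strictly decreasing on (t₀,∞) and maps (t₀,∞) bijectively onto (0,τ₀); moreover, denoting by w^{−1} : (0,τ₀) → (t₀,∞) the inverse function and setting ρ(τ) := 1/w^{−1}(τ), for every constant c > 0 one has lim_{τ→0⁺} ρ(τ)/ρ(cτ) = 1. -/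
open Filter Topology

/-- `f_t = ∫₀¹ f(ar) r^{t-3} dr`. -/
noncomputable def fT (a : ℝ) (f : ℝ → ℝ) (t : ℝ) : ℝ :=
  ∫ r in (0:ℝ)..1, f (a * r) * r ^ (t - 3)

/-- `w(t) = t^p · f_t² · (aκe/t)^{2t}`. -/
noncomputable def wfun (a κ p : ℝ) (f : ℝ → ℝ) (t : ℝ) : ℝ :=
  t ^ p * (fT a f t) ^ 2 * (a * κ * Real.exp 1 / t) ^ (2 * t)

/-!
Write `A = aκe`. For `u ≥ t ≥ t₀ := max 3 (max p (A e))` one has `w(u) ≤ w(t) e^{-(u-t)}`: `f_t` is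
nonincreasing in `t`, `(u/t)^p ≤ e^{u-t}` because `t ≥ p`, and
`(A/u)^{2u} ≤ (A/t)^{2t} (A/t)^{2(u-t)} ≤ (A/t)^{2t} e^{-2(u-t)}` because `A/t ≤ 1/e`.
This exponential decay makes the positive continuous function `w` strictly decreasing to `0`,
hence a bijection of `(t₀, ∞)` onto `(0, w(t₀))`. It also forces `|u - t| ≤ |log c|` whenever
`w(u) = c w(t)`; since `w⁻¹(τ) → ∞` as `τ → 0⁺`, the quotient `w⁻¹(cτ) / w⁻¹(τ)` tends to `1`.
-/

open Set MeasureTheory Real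

def ExpDecayFrom (g : ℝ → ℝ) (T : ℝ) : Prop :=
  ∀ ⦃t u : ℝ⦄, T ≤ t → t ≤ u → g u ≤ g t * exp (-(u - t))

lemma tendsto_div_of_abs_sub_le {α : Type*} {l : Filter α} {g h : α → ℝ} {C : ℝ}
    (hg : Tendsto g l atTop) (hbd : ∀ᶠ x in l, |h x - g x| ≤ C) :
    Tendsto (fun x => h x / g x) l (𝓝 1) := by
  have hsmall : Tendsto (fun x => (h x - g x) / g x) l (𝓝 0) := by
    refine squeeze_zero_norm' ?_ (tendsto_const_nhds (x := C) |>.div_atTop hg)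
    filter_upwards [hbd, hg.eventually_gt_atTop 0] with x hx hgx
    rw [norm_div, Real.norm_eq_abs, Real.norm_eq_abs, abs_of_pos hgx]
    gcongr
  rw [← add_zero (1 : ℝ)]
  refine (hsmall.const_add 1).congr' ?_
  filter_upwards [hg.eventually_gt_atTop 0] with x hgx
  field_simp
  ring

lemma StrictAntiOn.bijOn_Ioi_Ioo {g : ℝ → ℝ} {t₀ : ℝ} (hg : StrictAntiOn g (Ici t₀))
    (hcont : ContinuousOn g (Ici t₀)) (hlim : Tendsto g atTop (𝓝 0)) :
    BijOn g (Ioi t₀) (Ioo 0 (g t₀)) := by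
  have hnonneg : ∀ s ∈ Ici t₀, 0 ≤ g s := fun s hs =>
    le_of_tendsto hlim (by
      filter_upwards [eventually_ge_atTop s] with x hx
      exact hg.antitoneOn hs (mem_Ici.2 (le_trans hs hx)) hx)
  refine ⟨fun t ht => ⟨?_, hg (mem_Ici.2 le_rfl) (mem_Ici.2 (mem_Ioi.1 ht).le) ht⟩,
    (hg.mono Ioi_subset_Ici_self).injOn, fun y hy => ?_⟩
  · have ht' : t₀ ≤ t := (mem_Ioi.1 ht).le
    exact (hnonneg (t + 1) (mem_Ici.2 (by linarith))).trans_lt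
      (hg (mem_Ici.2 ht') (mem_Ici.2 (by linarith)) (lt_add_one t))
  · obtain ⟨T, hTy, hT⟩ :=
      ((hlim.eventually (gt_mem_nhds hy.1)).and (eventually_ge_atTop t₀)).exists
    obtain ⟨x, hx, rfl⟩ :=
      intermediate_value_Icc' hT (hcont.mono Icc_subset_Ici_self) ⟨hTy.le, hy.2.le⟩
    refine ⟨x, lt_of_le_of_ne hx.1 ?_, rfl⟩
    rintro rfl
    exact lt_irrefl _ hy.2

lemma StrictAntiOn.tendsto_atTop_of_invOn {g winv : ℝ → ℝ} {t₀ τ₀ : ℝ}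
    (hg : StrictAntiOn g (Ioi t₀)) (hbij : BijOn g (Ioi t₀) (Ioo 0 τ₀))
    (hinv : InvOn winv g (Ioi t₀) (Ioo 0 τ₀)) :
    Tendsto winv (𝓝[>] 0) atTop := by
  rw [tendsto_atTop]
  intro M
  have hs : max M t₀ + 1 ∈ Ioi t₀ := mem_Ioi.2 (by linarith [le_max_right M t₀])
  have hgs := hbij.mapsTo hs
  filter_upwards [Ioo_mem_nhdsGT hgs.1] with τ hτ
  have hτ' : τ ∈ Ioo 0 τ₀ := ⟨hτ.1, hτ.2.trans hgs.2⟩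
  have hlt : max M t₀ + 1 < winv τ :=
    (hg.lt_iff_gt ((hbij.symm hinv.symm).mapsTo hτ') hs).1 (by rw [hinv.2 hτ']; exact hτ.2)
  linarith [le_max_left M t₀]

namespace ExpDecayFrom

variable {g : ℝ → ℝ} {T : ℝ}

lemma strictAntiOn (hg : ExpDecayFrom g T) (hpos : ∀ t, T ≤ t → 0 < g t) :
    StrictAntiOn g (Ici T) := fun t ht _ _ htu =>
  (hg ht htu.le).trans_lt
    (mul_lt_of_lt_one_right (hpos t ht) (exp_lt_one_iff.2 (by linarith)))

lemma tendsto_zero (hg : ExpDecayFrom g T) (hpos : ∀ t, T ≤ t → 0 < g t) :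
    Tendsto g atTop (𝓝 0) := by
  have hlim : Tendsto (fun u => g T * exp (-(u - T))) atTop (𝓝 0) := by
    simpa [sub_eq_add_neg, add_comm] using (tendsto_exp_neg_atTop_nhds_zero.comp
      (tendsto_atTop_add_const_right _ (-T) tendsto_id)).const_mul (g T)
  refine squeeze_zero' ?_ ?_ hlim
  · filter_upwards [eventually_ge_atTop T] with u hu using (hpos u hu).le
  · filter_upwards [eventually_ge_atTop T] with u hu using hg le_rfl hu

lemma abs_sub_le_abs_log (hg : ExpDecayFrom g T) (hpos : ∀ t, T ≤ t → 0 < g t)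
    {t u c : ℝ} (ht : T ≤ t) (hu : T ≤ u) (hc : 0 < c) (h : g u = c * g t) :
    |u - t| ≤ |log c| := by
  have hgt := hpos t ht
  rw [abs_le]
  rcases le_total t u with htu | hut
  · have hlog := log_le_log (by positivity) (h ▸ hg ht htu)
    rw [log_mul hc.ne' hgt.ne', log_mul hgt.ne' (exp_pos _).ne', log_exp] at hlog
    constructor <;> linarith [neg_abs_le (log c)]
  · have hlog := log_le_log hgt (h ▸ hg hu hut)
    rw [log_mul (by positivity) (exp_pos _).ne', log_mul hc.ne' hgt.ne', log_exp] at hlog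
    constructor <;> linarith [le_abs_self (log c)]

lemma tendsto_div_of_invOn {winv : ℝ → ℝ} {τ₀ c : ℝ} (hg : ExpDecayFrom g T)
    (hpos : ∀ t, T ≤ t → 0 < g t) (hbij : BijOn g (Ioi T) (Ioo 0 τ₀))
    (hinv : InvOn winv g (Ioi T) (Ioo 0 τ₀)) (hc : 0 < c) :
    Tendsto (fun τ => winv (c * τ) / winv τ) (𝓝[>] 0) (𝓝 1) := by
  have hτ₀ : 0 < τ₀ := (hbij.mapsTo (lt_add_one T)).1.trans (hbij.mapsTo (lt_add_one T)).2
  have hmaps := (hbij.symm hinv.symm).mapsTo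
  refine tendsto_div_of_abs_sub_le (C := |log c|)
    (((hg.strictAntiOn hpos).mono Ioi_subset_Ici_self).tendsto_atTop_of_invOn hbij hinv) ?_
  filter_upwards [Ioo_mem_nhdsGT (lt_min hτ₀ (div_pos hτ₀ hc))] with τ hτ
  have hτ' : τ ∈ Ioo 0 τ₀ := ⟨hτ.1, hτ.2.trans_le (min_le_left _ _)⟩
  have hcτ : c * τ ∈ Ioo 0 τ₀ :=
    ⟨mul_pos hc hτ.1, (lt_div_iff₀' hc).1 (hτ.2.trans_le (min_le_right _ _))⟩
  refine hg.abs_sub_le_abs_log hpos (hmaps hτ').le (hmaps hcτ).le hc ?_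
  rw [hinv.2 hcτ, hinv.2 hτ']

end ExpDecayFrom

lemma rpow_div_le_exp_sub {p t u : ℝ} (hp : 0 ≤ p) (ht : 0 < t) (htu : t ≤ u) (hpt : p ≤ t) :
    (u / t) ^ p ≤ exp (u - t) := by
  calc (u / t) ^ p ≤ exp (u / t - 1) ^ p :=
        rpow_le_rpow (div_nonneg (ht.le.trans htu) ht.le)
          (by linarith [add_one_le_exp (u / t - 1)]) hp
    _ = exp ((u - t) * (p / t)) := by
        rw [← exp_mul]
        congr 1
        field_simp
    _ ≤ exp (u - t) :=
        exp_le_exp.2 (mul_le_of_le_one_right (by linarith) ((div_le_one ht).2 hpt))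

lemma div_rpow_le_exp_neg {A t s : ℝ} (hA : 0 < A) (hAt : A * exp 1 ≤ t) (hs : 0 ≤ s) :
    (A / t) ^ s ≤ exp (-s) := by
  have ht : 0 < t := (mul_pos hA (exp_pos 1)).trans_le hAt
  have hle : A / t ≤ exp (-1) := by
    rw [div_le_iff₀ ht, exp_neg, inv_mul_eq_div, le_div_iff₀ (exp_pos 1)]
    exact hAt
  calc (A / t) ^ s ≤ exp (-1) ^ s := rpow_le_rpow (by positivity) hle hs
    _ = exp (-s) := by rw [← exp_mul, neg_one_mul]

section Weight

variable {a κ p : ℝ} {f : ℝ → ℝ}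

lemma fT_four : fT a f 4 = ∫ r in (0:ℝ)..1, f (a * r) * r := by
  norm_num [fT]

lemma fT_integrand_mem_Icc (hf01 : ∀ r ∈ Icc (0:ℝ) 1, f (a * r) ∈ Icc (0:ℝ) 1) {t r : ℝ}
    (ht : 3 ≤ t) (hr : r ∈ Icc (0:ℝ) 1) : f (a * r) * r ^ (t - 3) ∈ Icc (0:ℝ) 1 :=
  ⟨mul_nonneg (hf01 r hr).1 (rpow_nonneg hr.1 _),
    mul_le_one₀ (hf01 r hr).2 (rpow_nonneg hr.1 _) (rpow_le_one hr.1 hr.2 (by linarith))⟩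

lemma fT_integrand_norm_le_one (hf01 : ∀ r ∈ Icc (0:ℝ) 1, f (a * r) ∈ Icc (0:ℝ) 1) {t r : ℝ}
    (ht : 3 ≤ t) (hr : r ∈ Icc (0:ℝ) 1) : ‖f (a * r) * r ^ (t - 3)‖ ≤ 1 :=
  (Real.norm_of_nonneg (fT_integrand_mem_Icc hf01 ht hr).1).trans_le
    (fT_integrand_mem_Icc hf01 ht hr).2

lemma fT_integrand_measurable (hf : Measurable f) (t : ℝ) :
    Measurable fun r : ℝ => f (a * r) * r ^ (t - 3) :=
  (hf.comp (measurable_const_mul a)).mul (measurable_id.pow_const _)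

lemma fT_intervalIntegrable (hf : Measurable f)
    (hf01 : ∀ r ∈ Icc (0:ℝ) 1, f (a * r) ∈ Icc (0:ℝ) 1) {t : ℝ} (ht : 3 ≤ t) :
    IntervalIntegrable (fun r : ℝ => f (a * r) * r ^ (t - 3)) volume 0 1 := by
  rw [intervalIntegrable_iff_integrableOn_Ioc_of_le zero_le_one]
  refine Measure.integrableOn_of_bounded (M := 1) (by simp)
    (fT_integrand_measurable hf t).aestronglyMeasurable ?_
  filter_upwards [ae_restrict_mem measurableSet_Ioc] with r hr
    using fT_integrand_norm_le_one hf01 ht (Ioc_subset_Icc_self hr)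

lemma fT_antitoneOn (hf : Measurable f) (hf01 : ∀ r ∈ Icc (0:ℝ) 1, f (a * r) ∈ Icc (0:ℝ) 1) :
    AntitoneOn (fT a f) (Ici 3) := by
  intro s hs t ht hst
  refine intervalIntegral.integral_mono_on zero_le_one (fT_intervalIntegrable hf hf01 ht)
    (fT_intervalIntegrable hf hf01 hs) fun r hr =>
      mul_le_mul_of_nonneg_left (rpow_le_rpow_of_exponent_ge' hr.1 hr.2
        (by linarith [mem_Ici.1 hs]) (by linarith)) (hf01 r hr).1

lemma fT_pos (hf : Measurable f) (hf01 : ∀ r ∈ Icc (0:ℝ) 1, f (a * r) ∈ Icc (0:ℝ) 1)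
    (h4 : 0 < fT a f 4) {t : ℝ} (ht : 3 ≤ t) : 0 < fT a f t := by
  have hpos_iff : ∀ s, 3 ≤ s →
      (0 < fT a f s ↔ 0 < volume (Function.support (fun r => f (a * r)) ∩ Ioc 0 1)) := by
    intro s hs
    have hnonneg : 0 ≤ᵐ[volume.restrict (uIoc 0 1)] fun r : ℝ => f (a * r) * r ^ (s - 3) := by
      rw [uIoc_of_le zero_le_one]
      filter_upwards [ae_restrict_mem measurableSet_Ioc] with r hr
      exact (fT_integrand_mem_Icc hf01 hs (Ioc_subset_Icc_self hr)).1
    rw [fT, intervalIntegral.integral_pos_iff_support_of_nonneg_ae' hnonneg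
      (fT_intervalIntegrable hf hf01 hs)]
    have hsupp : Function.support (fun r : ℝ => f (a * r) * r ^ (s - 3)) ∩ Ioc 0 1
        = Function.support (fun r => f (a * r)) ∩ Ioc 0 1 := by
      ext r
      simp only [mem_inter_iff, Function.mem_support, and_congr_left_iff]
      intro hr
      simp [(rpow_pos_of_pos hr.1 _).ne']
    rw [hsupp]
    simp
  exact (hpos_iff t ht).2 ((hpos_iff 4 (by norm_num)).1 h4)

lemma fT_continuousOn (hf : Measurable f) (hf01 : ∀ r ∈ Icc (0:ℝ) 1, f (a * r) ∈ Icc (0:ℝ) 1) :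
    ContinuousOn (fT a f) (Ici 3) := by
  have hset : ContinuousOn (fun t : ℝ => ∫ r in Ioc (0:ℝ) 1, f (a * r) * r ^ (t - 3))
      (Ici 3) := by
    refine continuousOn_of_dominated (bound := fun _ => 1)
      (fun t _ => (fT_integrand_measurable hf t).aestronglyMeasurable) (fun t ht => ?_)
      (integrableOn_const (by simp)) ?_
    · filter_upwards [ae_restrict_mem measurableSet_Ioc] with r hr
        using fT_integrand_norm_le_one hf01 (mem_Ici.1 ht) (Ioc_subset_Icc_self hr)
    · filter_upwards [ae_restrict_mem measurableSet_Ioc] with r hr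
      exact (continuous_const.mul ((continuous_const_rpow hr.1.ne').comp
        (continuous_sub_right 3))).continuousOn
  exact hset.congr fun t _ => intervalIntegral.integral_of_le zero_le_one

lemma wfun_pos (ha : 0 < a) (hκ : 0 < κ) (hf : Measurable f)
    (hf01 : ∀ r ∈ Icc (0:ℝ) 1, f (a * r) ∈ Icc (0:ℝ) 1) (h4 : 0 < fT a f 4) {t : ℝ}
    (ht : 3 ≤ t) : 0 < wfun a κ p f t := by
  have ht0 : 0 < t := by linarith
  have := fT_pos hf hf01 h4 ht
  unfold wfun
  positivity

lemma wfun_continuousOn (ha : 0 < a) (hκ : 0 < κ) (hf : Measurable f)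
    (hf01 : ∀ r ∈ Icc (0:ℝ) 1, f (a * r) ∈ Icc (0:ℝ) 1) :
    ContinuousOn (wfun a κ p f) (Ici 3) := by
  have hne : ∀ t ∈ Ici (3:ℝ), t ≠ 0 := fun t ht => by linarith [mem_Ici.1 ht]
  refine ((continuousOn_id.rpow_const fun t ht => Or.inl (hne t ht)).mul
    ((fT_continuousOn hf hf01).pow 2)).mul
    ((continuousOn_const.div continuousOn_id hne).rpow (continuousOn_const.mul continuousOn_id)
      fun t ht => Or.inl (div_ne_zero (by positivity) (hne t ht)))

lemma wfun_expDecayFrom (ha : 0 < a) (hκ : 0 < κ) (hp : 0 < p) (hf : Measurable f)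
    (hf01 : ∀ r ∈ Icc (0:ℝ) 1, f (a * r) ∈ Icc (0:ℝ) 1) (h4 : 0 < fT a f 4) :
    ExpDecayFrom (wfun a κ p f) (max 3 (max p (a * κ * exp 1 * exp 1))) := by
  intro t u hT htu
  set A := a * κ * exp 1
  have hA : 0 < A := by positivity
  have ht3 : 3 ≤ t := le_of_max_le_left hT
  have ht0 : 0 < t := by linarith
  have hu0 : 0 < u := ht0.trans_le htu
  have hu_p : u ^ p = t ^ p * (u / t) ^ p := by
    rw [← mul_rpow ht0.le (by positivity), mul_div_cancel₀ _ ht0.ne']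
  have hfT : fT a f u ^ 2 ≤ fT a f t ^ 2 :=
    pow_le_pow_left₀ (fT_pos hf hf01 h4 (ht3.trans htu)).le
      (fT_antitoneOn hf hf01 (mem_Ici.2 ht3) (mem_Ici.2 (ht3.trans htu)) htu) 2
  have hA_u : (A / u) ^ (2 * u) ≤ (A / t) ^ (2 * t) * (A / t) ^ (2 * (u - t)) := by
    rw [← rpow_add (by positivity), show 2 * t + 2 * (u - t) = 2 * u by ring]
    exact rpow_le_rpow (by positivity) (div_le_div_of_nonneg_left hA.le ht0 htu) (by linarith)
  have hw_t : 0 ≤ wfun a κ p f t := (wfun_pos ha hκ hf hf01 h4 ht3).le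
  calc wfun a κ p f u = t ^ p * (u / t) ^ p * fT a f u ^ 2 * (A / u) ^ (2 * u) := by
        rw [wfun, hu_p]
    _ ≤ t ^ p * (u / t) ^ p * fT a f t ^ 2 * ((A / t) ^ (2 * t) * (A / t) ^ (2 * (u - t))) := by
        gcongr
    _ = wfun a κ p f t * ((u / t) ^ p * (A / t) ^ (2 * (u - t))) := by
        rw [wfun]
        ring
    _ ≤ wfun a κ p f t * (exp (u - t) * exp (-(2 * (u - t)))) := by
        gcongr
        · exact rpow_div_le_exp_sub hp.le ht0 htu (le_of_max_le_left (le_of_max_le_right hT))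
        · exact div_rpow_le_exp_neg hA (le_of_max_le_right (le_of_max_le_right hT))
            (by linarith)
    _ = wfun a κ p f t * exp (-(u - t)) := by
        rw [← exp_add]
        ring_nf

end Weight

theorem stmt5 (a κ p : ℝ) (ha : 0 < a) (hκ : 0 < κ) (hp : 0 < p)
    (f : ℝ → ℝ) (hf : Measurable f)
    (hf01 : ∀ r ∈ Set.Icc (0 : ℝ) a, f r ∈ Set.Icc (0 : ℝ) 1)
    (hpos : 0 < ∫ r in (0:ℝ)..1, f (a * r) * r) :
    ∃ t₀ ≥ (3 : ℝ), ∃ τ₀ > (0 : ℝ),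
      StrictAntiOn (wfun a κ p f) (Set.Ioi t₀) ∧
      Set.BijOn (wfun a κ p f) (Set.Ioi t₀) (Set.Ioo 0 τ₀) ∧
      ∃ winv : ℝ → ℝ,
        Set.InvOn winv (wfun a κ p f) (Set.Ioi t₀) (Set.Ioo 0 τ₀) ∧
        ∀ c > (0 : ℝ),
          Tendsto (fun τ => (1 / winv τ) / (1 / winv (c * τ))) (𝓝[>] (0 : ℝ)) (𝓝 1) := by
  have hf01' : ∀ r ∈ Icc (0:ℝ) 1, f (a * r) ∈ Icc (0:ℝ) 1 := fun r hr =>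
    hf01 _ ⟨mul_nonneg ha.le hr.1, mul_le_of_le_one_right ha.le hr.2⟩
  have h4 : 0 < fT a f 4 := fT_four (a := a) (f := f) ▸ hpos
  set T := max 3 (max p (a * κ * exp 1 * exp 1))
  have hT : 3 ≤ T := le_max_left _ _
  have hw_pos : ∀ t, T ≤ t → 0 < wfun a κ p f t := fun t ht =>
    wfun_pos ha hκ hf hf01' h4 (hT.trans ht)
  have hdecay := wfun_expDecayFrom ha hκ hp hf hf01' h4
  have hanti := hdecay.strictAntiOn hw_pos
  have hbij := hanti.bijOn_Ioi_Ioo ((wfun_continuousOn ha hκ hf hf01').mono (Ici_subset_Ici.2 hT))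
    (hdecay.tendsto_zero hw_pos)
  have hinv := hbij.invOn_invFunOn
  refine ⟨T, hT, _, hw_pos T le_rfl, hanti.mono Ioi_subset_Ici_self, hbij, _, hinv, fun c hc => ?_⟩
  simpa only [one_div, inv_div_inv] using hdecay.tendsto_div_of_invOn hw_pos hbij hinv hc
end

section
/- For all integers m, n, k with 0 ≤ m ≤ n and k ≥ 0, (1/2π) ∫₀^{2π} (cos t)^m (cos t − 1)^k e^{int} dt = (−1)^{k+n+m} Σ_{l=0}^{⌊(k−n+m)/2⌋} 2^{−(2l+n)} · C(k, 2l+n−m) · C(2l+n, l), where C(·,·) denotes the binomial coefficient and the sum is understood to be 0 when k < n − m. -/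
/-!
With `z = exp (I t)` we have `cos t = (z + z⁻¹) / 2`. Expanding `(cos t - 1) ^ k` binomially
reduces the integrand to a combination of `cos t ^ (m + a) * z ^ n`, and expanding each of these
gives a Laurent polynomial in `z`. Averaging over a period keeps only its constant term, which for
`cos t ^ N * z ^ n` is `2⁻ᴺ * N.choose ((N - n) / 2)` when `n ≤ N` and `N - n` is even, and `0`
otherwise. The surviving indices are `a = 2 l + n - m`.
-/

open Finset Complex

noncomputable def periodMean (f : ℝ → ℂ) : ℂ :=
  (1 / (2 * Real.pi) : ℂ) * ∫ t in (0 : ℝ)..(2 * Real.pi), f t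

lemma periodMean_const_mul (c : ℂ) (f : ℝ → ℂ) :
    periodMean (fun t => c * f t) = c * periodMean f := by
  simp only [periodMean, intervalIntegral.integral_const_mul]
  ring

lemma periodMean_sum {ι : Type*} (s : Finset ι) (f : ι → ℝ → ℂ)
    (hf : ∀ i ∈ s, IntervalIntegrable (f i) MeasureTheory.volume 0 (2 * Real.pi)) :
    periodMean (fun t => ∑ i ∈ s, f i t) = ∑ i ∈ s, periodMean (f i) := by
  simp only [periodMean, intervalIntegral.integral_finsetSum hf, Finset.mul_sum]

lemma periodMean_exp_int_mul_I (j : ℤ) :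
    periodMean (fun t => exp (I * j * t)) = if j = 0 then 1 else 0 := by
  split_ifs with hj
  · simp only [periodMean, hj, Int.cast_zero, mul_zero, zero_mul, exp_zero,
      intervalIntegral.integral_const, sub_zero, real_smul, ofReal_mul, ofReal_ofNat, mul_one]
    field_simp
  · have hc : I * j ≠ 0 := mul_ne_zero I_ne_zero (Int.cast_ne_zero.mpr hj)
    have hperiod : exp (I * j * (2 * Real.pi)) = 1 := by
      rw [← exp_int_mul_two_pi_mul_I j]
      ring_nf
    simp [periodMean, integral_exp_mul_complex hc, hperiod]

lemma pow_mul_inv_pow_mul_zpow {G₀ : Type*} [CommGroupWithZero G₀] {z : G₀} (hz : z ≠ 0)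
    {b N : ℕ} (hb : b ≤ N) (n : ℤ) :
    z ^ b * z⁻¹ ^ (N - b) * z ^ n = z ^ (2 * b + n - N) := by
  rw [inv_pow, ← zpow_natCast, ← zpow_natCast, ← zpow_neg, ← zpow_add₀ hz, ← zpow_add₀ hz]
  congr 1
  push_cast [hb]
  ring

lemma cos_pow_mul_exp_eq_sum (N : ℕ) (n : ℤ) (t : ℝ) :
    (Real.cos t : ℂ) ^ N * exp (I * n * t) =
      ∑ b ∈ range (N + 1),
        ((2 : ℂ) ^ N)⁻¹ * N.choose b * exp (I * ((2 * b + n - N : ℤ) : ℂ) * t) := by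
  have hexp (j : ℤ) : exp (I * j * t) = exp (I * t) ^ j := by
    rw [show I * j * t = j * (I * t) by ring, exp_int_mul]
  have hcos : (Real.cos t : ℂ) = (exp (I * t) + (exp (I * t))⁻¹) / 2 := by
    rw [ofReal_cos, cos, ← exp_neg]
    ring_nf
  rw [hcos, div_pow, add_pow, Finset.sum_div, Finset.sum_mul]
  refine Finset.sum_congr rfl fun b hb => ?_
  rw [hexp, hexp,
    ← pow_mul_inv_pow_mul_zpow (exp_ne_zero _) (Nat.lt_succ_iff.mp (mem_range.mp hb))]
  ring

lemma periodMean_cos_pow_mul_exp (N n : ℕ) :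
    periodMean (fun t => (Real.cos t : ℂ) ^ N * exp (I * n * t)) =
      if n ≤ N ∧ Even (N - n) then ((2 : ℂ) ^ N)⁻¹ * N.choose ((N - n) / 2) else 0 := by
  rw [← Int.cast_natCast (R := ℂ) n]
  simp only [cos_pow_mul_exp_eq_sum]
  rw [periodMean_sum _ _ fun b _ => (by fun_prop : Continuous _).intervalIntegrable _ _]
  simp only [periodMean_const_mul, periodMean_exp_int_mul_I]
  split_ifs with h
  · obtain ⟨hn, r, hr⟩ := h
    rw [Finset.sum_eq_single_of_mem ((N - n) / 2) (by rw [mem_range]; omega)]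
    · rw [if_pos (by omega), mul_one]
    · intro b _ hb
      rw [if_neg (by omega), mul_zero]
  · refine Finset.sum_eq_zero fun b _ => ?_
    rw [if_neg fun hb => h ⟨by omega, b, by omega⟩, mul_zero]

lemma pow_mul_sub_one_pow_eq_sum {R : Type*} [CommRing R] (x : R) (m k : ℕ) :
    x ^ m * (x - 1) ^ k = ∑ a ∈ range (k + 1), (-1) ^ (k - a) * k.choose a * x ^ (m + a) := by
  rw [sub_eq_add_neg, add_pow, Finset.mul_sum]
  refine Finset.sum_congr rfl fun a _ => ?_
  ring

lemma sum_neg_one_pow_mul_choose_mul_ite_even {K : Type*} [Field K] {m n : ℕ} (k : ℕ)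
    (hmn : m ≤ n) :
    ∑ a ∈ range (k + 1), (-1) ^ (k - a) * k.choose a *
        (if n ≤ m + a ∧ Even (m + a - n) then
          ((2 : K) ^ (m + a))⁻¹ * (m + a).choose ((m + a - n) / 2) else 0) =
      (-1) ^ (k + n + m) *
        if n ≤ k + m then
          ∑ l ∈ range ((k + m - n) / 2 + 1),
            ((2 : K) ^ (2 * l + n))⁻¹ * k.choose (2 * l + n - m) * (2 * l + n).choose l
        else 0 := by
  simp only [mul_ite, mul_zero]
  rw [← Finset.sum_filter]
  split_ifs with hnk
  · rw [Finset.mul_sum]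
    refine Finset.sum_nbij' (fun a => (m + a - n) / 2) (fun l => 2 * l + n - m) ?_ ?_ ?_ ?_ ?_
    · intro a ha
      simp only [mem_filter, mem_range] at ha ⊢
      omega
    · intro l hl
      simp only [mem_filter, mem_range] at hl ⊢
      exact ⟨by omega, by omega, l, by omega⟩
    · intro a ha
      obtain ⟨-, hna, r, hr⟩ := mem_filter.mp ha
      omega
    · intro l _
      omega
    · intro a ha
      obtain ⟨hak, hna, r, hr⟩ := mem_filter.mp ha
      have hak := mem_range.mp hak
      have hsign : (-1 : K) ^ (k + n + m) = (-1) ^ (k - a) := by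
        rw [show k + n + m = (k - a) + 2 * (r + n) by omega, pow_add, pow_mul, neg_one_sq,
          one_pow, mul_one]
      rw [show (m + a - n) / 2 = r by omega, show 2 * r + n - m = a by omega,
        show m + a = 2 * r + n by omega, hsign]
      ring
  · refine Finset.sum_eq_zero fun a ha => ?_
    simp only [mem_filter, mem_range] at ha
    omega

theorem stmt13 (m n k : ℕ) (hmn : m ≤ n) :
    (1 / (2 * Real.pi) : ℂ) *
      ∫ t in (0:ℝ)..(2 * Real.pi),
        ((Real.cos t : ℂ)) ^ m * ((Real.cos t : ℂ) - 1) ^ k *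
          Complex.exp (Complex.I * ((n : ℂ) * (t : ℂ))) =
    ((((-1 : ℝ) ^ (k + n + m)) *
      (if n ≤ k + m then
        ∑ l ∈ Finset.range ((k + m - n) / 2 + 1),
          ((2 : ℝ) ^ (2 * l + n))⁻¹ * (Nat.choose k (2 * l + n - m) : ℝ) *
            (Nat.choose (2 * l + n) l : ℝ)
      else 0) : ℝ) : ℂ) := by
  have hexpand : (fun t : ℝ => (Real.cos t : ℂ) ^ m * ((Real.cos t : ℂ) - 1) ^ k *
      exp (I * (n * t))) = fun t => ∑ a ∈ range (k + 1),
        (-1) ^ (k - a) * k.choose a * ((Real.cos t : ℂ) ^ (m + a) * exp (I * n * t)) := by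
    funext t
    rw [pow_mul_sub_one_pow_eq_sum, Finset.sum_mul, ← mul_assoc I]
    refine Finset.sum_congr rfl fun a _ => ?_
    ring
  change periodMean _ = _
  rw [hexpand, periodMean_sum _ _ fun a _ => (by fun_prop : Continuous _).intervalIntegrable _ _]
  simp only [periodMean_const_mul, periodMean_cos_pow_mul_exp]
  rw [sum_neg_one_pow_mul_choose_mul_ite_even k hmn]
  split_ifs <;> push_cast <;> rfl
end

section
/- For all integers n ≥ 2, m ∈ {0,1,2} and k ≥ 0, Σ_{l=0}^{⌊k/2⌋} 2^{−n−2l} · C(k+n−m, 2l+n−m) · C(2l+n, l) ≤ e^{1/4} · (k+n−m)! · n² · (k+1)² / (2^n · n!). -/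
/-!
With `a = 2l + n` and `N = k + n - m`, the `l`-th term is bounded through
`C(a, l) l! n! ≤ a! ≤ (a - m)! a^m` and `C(N, a - m) (a - m)! ≤ N!`, together with
`a^m ≤ n² (k + 1)²`. This gives the term bound `N! n² (k+1)² / (2ⁿ n!) · (1/4)^l / l!`,
and the partial sum of the exponential series is at most `e^{1/4}`.
-/

open Nat Finset

namespace Nat

theorem choose_mul_factorial_le_factorial (n k : ℕ) : n.choose k * k ! ≤ n ! := by
  rcases le_or_gt k n with hk | hk
  · rw [← choose_mul_factorial_mul_factorial hk]
    exact Nat.le_mul_of_pos_right _ (factorial_pos _)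
  · simp [choose_eq_zero_of_lt hk]

theorem factorial_le_factorial_sub_mul_pow {n k : ℕ} (hk : k ≤ n) : n ! ≤ (n - k)! * n ^ k := by
  rw [← factorial_mul_descFactorial hk]
  exact Nat.mul_le_mul_left _ (descFactorial_le_pow n k)

theorem choose_mul_factorial_mul_factorial_le (i j k : ℕ) :
    (i + j + k).choose i * (i ! * j !) ≤ (i + j + k)! := by
  calc (i + j + k).choose i * (i ! * j !) ≤ (i + j + k).choose i * (i ! * (j + k)!) :=
        Nat.mul_le_mul_left _ (Nat.mul_le_mul_left _ (factorial_le (Nat.le_add_right j k)))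
    _ = (i + j + k)! := by
        rw [← Nat.mul_assoc, add_assoc, choose_symm_add, add_choose_mul_factorial_mul_factorial]

end Nat

theorem choose_mul_choose_mul_factorial_le (N n l m : ℕ) (hm : m ≤ 2 * l + n) :
    N.choose (2 * l + n - m) * (2 * l + n).choose l * (l ! * n !) ≤ N ! * (2 * l + n) ^ m := by
  set a := 2 * l + n
  calc N.choose (a - m) * a.choose l * (l ! * n !) ≤ N.choose (a - m) * a ! := by
        rw [Nat.mul_assoc]
        refine Nat.mul_le_mul_left _ ?_
        simpa [a, two_mul, add_right_comm] using choose_mul_factorial_mul_factorial_le l n l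
    _ ≤ N.choose (a - m) * ((a - m)! * a ^ m) :=
        Nat.mul_le_mul_left _ (factorial_le_factorial_sub_mul_pow hm)
    _ ≤ N ! * a ^ m := by
        rw [← Nat.mul_assoc]
        exact Nat.mul_le_mul_right _ (choose_mul_factorial_le_factorial N _)

theorem pow_le_sq_mul_succ_sq {n m k l : ℕ} (hn : 1 ≤ n) (hm : m ≤ 2) (hl : 2 * l ≤ k) :
    (2 * l + n) ^ m ≤ n ^ 2 * (k + 1) ^ 2 := by
  calc (2 * l + n) ^ m ≤ (2 * l + n) ^ 2 := Nat.pow_le_pow_right (by omega) hm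
    _ ≤ (n * (k + 1)) ^ 2 := Nat.pow_le_pow_left (by nlinarith) 2
    _ = n ^ 2 * (k + 1) ^ 2 := Nat.mul_pow ..

theorem inv_two_pow_mul_choose_mul_choose_le (N n m k l : ℕ) (hn : 2 ≤ n) (hm : m ≤ 2)
    (hl : 2 * l ≤ k) :
    ((2 : ℝ) ^ (n + 2 * l))⁻¹ * (N.choose (2 * l + n - m) : ℝ) * ((2 * l + n).choose l : ℝ) ≤
      N ! * (n : ℝ) ^ 2 * ((k : ℝ) + 1) ^ 2 / (2 ^ n * n !) * ((1 / 4) ^ l / l !) := by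
  have hnat : N.choose (2 * l + n - m) * (2 * l + n).choose l * (l ! * n !) ≤
      N ! * (n ^ 2 * (k + 1) ^ 2) :=
    (choose_mul_choose_mul_factorial_le N n l m (by omega)).trans
      (Nat.mul_le_mul_left _ (pow_le_sq_mul_succ_sq (by omega) hm hl))
  have hpow : (2 : ℝ) ^ (n + 2 * l) = 2 ^ n * 4 ^ l := by rw [pow_add, pow_mul]; norm_num
  rw [hpow, _root_.div_mul_div_comm, one_div_pow, mul_one_div, div_div, le_div_iff₀ (by positivity)]
  calc _ = (N.choose (2 * l + n - m) * (2 * l + n).choose l * (l ! * n !) : ℝ) := by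
          field_simp
    _ ≤ _ := by rw [mul_assoc (N ! : ℝ)]; exact_mod_cast hnat

theorem stmt14 (n m k : ℕ) (hn : 2 ≤ n) (hm : m ≤ 2) :
    ∑ l ∈ Finset.range (k / 2 + 1),
        ((2 : ℝ) ^ (n + 2 * l))⁻¹ * (Nat.choose (k + n - m) (2 * l + n - m) : ℝ) *
          (Nat.choose (2 * l + n) l : ℝ) ≤
      Real.exp (1 / 4) * (Nat.factorial (k + n - m) : ℝ) * (n : ℝ) ^ 2 * ((k : ℝ) + 1) ^ 2 /
        ((2 : ℝ) ^ n * (Nat.factorial n : ℝ)) := by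
  set C : ℝ := (k + n - m)! * (n : ℝ) ^ 2 * ((k : ℝ) + 1) ^ 2 / (2 ^ n * n !)
  calc _ ≤ ∑ l ∈ range (k / 2 + 1), C * ((1 / 4) ^ l / l !) :=
        sum_le_sum fun l hl ↦ inv_two_pow_mul_choose_mul_choose_le _ n m k l hn hm (by grind)
    _ = C * ∑ l ∈ range (k / 2 + 1), (1 / 4 : ℝ) ^ l / l ! := (mul_sum ..).symm
    _ ≤ C * Real.exp (1 / 4) := by gcongr; exact Real.sum_le_exp_of_nonneg (by norm_num) _
    _ = _ := by ring
end
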